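/- arXiv:2508.20342 — 2 statements merged into one kernel-verified Lean document; each statement's English description precedes it below -/
import Mathlib

section
/- Let 0 < α < n, N ∈ ℕ, and let q_N(·,k) be the degree N−1 Taylor polynomial of x ↦ |k−x|^{α−n} around k⁰ ∈ ℤⁿ. Then for all i, k ∈ ℤⁿ with |k−k⁰|_∞ ≥ 2|i−k⁰|_∞ > 0, one has | |i−k|^{α−n} − q_N(i,k) | ≤ C |i−k⁰|_∞^N |k−k⁰|_∞^{α−n−N}, with C independent of i, k, k⁰. -/
open scoped BigOperators ENNReal

noncomputable section

/-- Euclidean norm of an integer vector in `ℤⁿ`. -/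
def znorm {n : ℕ} (j : Fin n → ℤ) : ℝ := Real.sqrt (∑ l, ((j l : ℝ)) ^ 2)

/-- `ℓ^∞` norm of an integer vector, as a natural number. -/
def zinf {n : ℕ} (j : Fin n → ℤ) : ℕ := Finset.univ.sup fun l => (j l).natAbs

/-- The discrete cube centered at `k0` with "radius" `m` (side length `2m+1`),
i.e. `{i : |i - k0|_∞ ≤ m}`. -/
def dcube {n : ℕ} (k0 : Fin n → ℤ) (m : ℕ) : Finset (Fin n → ℤ) :=
  Finset.Icc (fun l => k0 l - m) (fun l => k0 l + m)

/-- The discrete Riesz potential `(I_α b)(j) = ∑_{i ≠ j} b(i) |i-j|^{α-n}`. -/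
def rieszPot {n : ℕ} (α : ℝ) (b : (Fin n → ℤ) → ℝ) (j : Fin n → ℤ) : ℝ :=
  ∑' i : {i : Fin n → ℤ // i ≠ j}, b i.1 * znorm (i.1 - j) ^ (α - n)

/-- Embedding of `ℤⁿ` into Euclidean space `ℝⁿ`. -/
def toE {n : ℕ} (j : Fin n → ℤ) : EuclideanSpace ℝ (Fin n) := WithLp.toLp 2 (fun l => (j l : ℝ))

/-- The discretized dilation `Φ_t^d(j) = t^{-n} Φ(j/t)` for `j ≠ 0`, and `Φ_t^d(0) = 0`. -/
def phid {n : ℕ} (Φ : SchwartzMap (EuclideanSpace ℝ (Fin n)) ℝ) (t : ℝ) (j : Fin n → ℤ) : ℝ :=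
  if j = 0 then 0 else t ^ (-(n : ℝ)) * Φ (t⁻¹ • toE j)

/-- Discrete convolution `(b ∗ c)(j) = ∑_i b(i) c(j-i)`. -/
def dconv {n : ℕ} (b c : (Fin n → ℤ) → ℝ) (j : Fin n → ℤ) : ℝ :=
  ∑' i : Fin n → ℤ, b i * c (j - i)

/-- The maximal function `sup_{t>0} |(Φ_t^d ∗ b)(j)|`, valued in `ℝ≥0∞`. -/
def maxFn {n : ℕ} (Φ : SchwartzMap (EuclideanSpace ℝ (Fin n)) ℝ) (b : (Fin n → ℤ) → ℝ)
    (j : Fin n → ℤ) : ℝ≥0∞ :=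
  ⨆ (t : ℝ) (_ : 0 < t), ENNReal.ofReal |dconv (phid Φ t) b j|

/-- The `ℓ^p` quasinorm (`0 < p < ∞`) of a real sequence on `ℤⁿ`, valued in `ℝ≥0∞`. -/
def elp {n : ℕ} (p : ℝ) (f : (Fin n → ℤ) → ℝ) : ℝ≥0∞ :=
  (∑' j : Fin n → ℤ, ENNReal.ofReal |f j| ^ p) ^ (1 / p)

/-- The `ℓ^p` quasinorm of an `ℝ≥0∞`-valued sequence on `ℤⁿ`. -/
def elpE {n : ℕ} (p : ℝ) (f : (Fin n → ℤ) → ℝ≥0∞) : ℝ≥0∞ :=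
  (∑' j : Fin n → ℤ, f j ^ p) ^ (1 / p)

/-- The discrete Hardy space quasinorm `‖b‖_{H^p} = ‖b‖_{ℓ^p} + ‖sup_{t>0}|Φ_t^d ∗ b|‖_{ℓ^p}`. -/
def hpNorm {n : ℕ} (Φ : SchwartzMap (EuclideanSpace ℝ (Fin n)) ℝ) (p : ℝ)
    (b : (Fin n → ℤ) → ℝ) : ℝ≥0∞ :=
  elp p b + elpE p (maxFn Φ b)

/-- A `(p, ∞, N)`-atom supported in the discrete cube `dcube k0 m`. -/
def IsDiscreteAtom {n : ℕ} (p : ℝ) (N : ℕ) (k0 : Fin n → ℤ) (m : ℕ)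
    (a : (Fin n → ℤ) → ℝ) : Prop :=
  (∀ j, j ∉ dcube k0 m → a j = 0) ∧
  (∀ j, |a j| ≤ ((dcube k0 m).card : ℝ) ^ (-(1 / p))) ∧
  (∀ β : Fin n → ℕ, (∑ l, β l) ≤ N →
    ∑ j ∈ dcube k0 m, (∏ l, ((j l : ℝ)) ^ β l) * a j = 0)

/-- The centered discrete fractional maximal operator
`(M_α b)(j) = sup_m (#Q_{j,m})^{α/n - 1} ∑_{i ∈ Q_{j,m}} |b(i)|`. -/
def fracMax {n : ℕ} (α : ℝ) (b : (Fin n → ℤ) → ℝ) (j : Fin n → ℤ) : ℝ≥0∞ :=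
  ⨆ m : ℕ, ENNReal.ofReal
    ((((dcube j m).card : ℝ) ^ (α / n - 1)) * ∑ i ∈ dcube j m, |b i|)

/-- The Taylor polynomial of degree `N - 1` of `f` centered at `c`, evaluated at `x`. -/
def taylorPoly {n : ℕ} (f : EuclideanSpace ℝ (Fin n) → ℝ) (c x : EuclideanSpace ℝ (Fin n))
    (N : ℕ) : ℝ :=
  ∑ r ∈ Finset.range N, (1 / r.factorial : ℝ) * iteratedFDeriv ℝ r f c (fun _ => x - c)

/-!
Every point of the segment from `k⁰` to `i` is at sup-distance at least `|k - k⁰|_∞ / 2` from `k`,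
so Taylor's formula with integral remainder bounds the error by
`sup ‖D^N (|k - ·|^{α-n})‖ · |i - k⁰|^N / N!`. The function `‖·‖^s` is homogeneous of degree `s`,
hence its `N`-th derivative is homogeneous of degree `s - N`; a bound on the unit sphere
(by compactness) then gives `‖D^N (‖·‖^s) u‖ ≤ M ‖u‖^{s-N}`, and since `s - N ≤ 0` this is at most
`M (|k - k⁰|_∞ / 2)^{s-N}` on the segment.
-/

open Nat WithLp

section IteratedFDeriv

variable {E : Type*} [NormedAddCommGroup E]

theorem norm_iteratedFDeriv_comp_const_sub {F : Type*} [NormedAddCommGroup F] [NormedSpace ℝ E]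
    [NormedSpace ℝ F] (g : E → F) (a x : E) (r : ℕ) :
    ‖iteratedFDeriv ℝ r (fun y => g (a - y)) x‖ = ‖iteratedFDeriv ℝ r g (a - x)‖ := by
  have : (fun y => g (a - y)) = (fun y => g (y + a)) ∘ LinearIsometryEquiv.neg ℝ := by
    ext y; simp [neg_add_eq_sub]
  rw [this, LinearIsometryEquiv.norm_iteratedFDeriv_comp_right, iteratedFDeriv_comp_add_right]
  simp [neg_add_eq_sub]

theorem norm_iteratedFDeriv_smul_of_homogeneous [NormedSpace ℝ E] {f : E → ℝ} {s : ℝ}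
    (hf : ∀ c : ℝ, 0 < c → ∀ y, f (c • y) = c ^ s * f y) (r : ℕ) {c : ℝ} (hc : 0 < c) (y : E) :
    ‖iteratedFDeriv ℝ r f (c • y)‖ = c ^ (s - r) * ‖iteratedFDeriv ℝ r f y‖ := by
  -- `f ∘ (c • ·) = (c ^ s • ·) ∘ f` with both scalings linear equivalences, whose chain rules
  -- hold without any smoothness of `f`.
  let g : E ≃L[ℝ] E := ContinuousLinearEquiv.smulLeft (Units.mk0 c hc.ne')
  let a : ℝ ≃L[ℝ] ℝ := ContinuousLinearEquiv.smulLeft (Units.mk0 (c ^ s) (by positivity))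
  have hfg : f ∘ g = a ∘ f := by
    ext y; simp [g, a, Units.smul_def, hf c hc]
  have hright : iteratedFDeriv ℝ r (f ∘ g) y = c ^ r • iteratedFDeriv ℝ r f (c • y) := by
    simp only [← iteratedFDerivWithin_univ]
    rw [← Set.preimage_univ (f := g), g.iteratedFDerivWithin_comp_right f uniqueDiffOn_univ
      (Set.mem_univ _)]
    ext m
    simp [g, Units.smul_def, ContinuousMultilinearMap.map_smul_univ]
  have hleft : iteratedFDeriv ℝ r (a ∘ f) y = c ^ s • iteratedFDeriv ℝ r f y := by
    rw [a.iteratedFDeriv_comp_left]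
    ext m
    simp [a, Units.smul_def]
  have key := congrArg norm (hright.symm.trans (hfg ▸ hleft))
  rw [norm_smul, norm_smul, Real.norm_of_nonneg (by positivity),
    Real.norm_of_nonneg (by positivity)] at key
  rw [Real.rpow_sub hc, Real.rpow_natCast, div_mul_eq_mul_div, ← key]
  field_simp

variable [InnerProductSpace ℝ E]

theorem contDiffAt_rpow_norm_const_sub {m : WithTop ℕ∞} {s : ℝ} {a x : E} (h : a - x ≠ 0) :
    ContDiffAt ℝ m (fun y => ‖a - y‖ ^ s) x :=
  ((contDiffAt_norm ℝ h).comp x (contDiffAt_const.sub contDiffAt_id)).rpow_const_of_ne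
    (norm_ne_zero_iff.mpr h)

theorem exists_norm_iteratedFDeriv_rpow_norm_le [FiniteDimensional ℝ E] (s : ℝ) (r : ℕ) :
    ∃ M > 0, ∀ u : E, u ≠ 0 →
      ‖iteratedFDeriv ℝ r (fun y : E => ‖y‖ ^ s) u‖ ≤ M * ‖u‖ ^ (s - r) := by
  have hsmooth : ContDiffOn ℝ r (fun y : E => ‖y‖ ^ s) {0}ᶜ := fun y hy =>
    ((contDiffAt_norm ℝ hy).rpow_const_of_ne (norm_ne_zero_iff.mpr hy)).contDiffWithinAt
  have hcont : ContinuousOn (iteratedFDeriv ℝ r (fun y : E => ‖y‖ ^ s)) {0}ᶜ :=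
    (hsmooth.continuousOn_iteratedFDerivWithin le_rfl isOpen_compl_singleton.uniqueDiffOn).congr
      (iteratedFDerivWithin_of_isOpen r isOpen_compl_singleton).symm
  obtain ⟨M, hM⟩ := (isCompact_sphere (0 : E) 1).exists_bound_of_continuousOn
    (hcont.mono fun y hy => Metric.ne_of_mem_sphere hy one_ne_zero)
  have hhom : ∀ c : ℝ, 0 < c → ∀ y : E, ‖c • y‖ ^ s = c ^ s * ‖y‖ ^ s := fun c hc y => by
    rw [norm_smul, Real.norm_of_nonneg hc.le, Real.mul_rpow hc.le (norm_nonneg y)]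
  refine ⟨max M 1, by positivity, fun u hu => ?_⟩
  have hu' : 0 < ‖u‖ := norm_pos_iff.mpr hu
  calc ‖iteratedFDeriv ℝ r (fun y : E => ‖y‖ ^ s) u‖
      = ‖iteratedFDeriv ℝ r (fun y : E => ‖y‖ ^ s) (‖u‖ • ‖u‖⁻¹ • u)‖ := by
        rw [smul_inv_smul₀ hu'.ne']
    _ = ‖u‖ ^ (s - r) * ‖iteratedFDeriv ℝ r (fun y : E => ‖y‖ ^ s) (‖u‖⁻¹ • u)‖ :=
        norm_iteratedFDeriv_smul_of_homogeneous hhom r hu' _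
    _ ≤ ‖u‖ ^ (s - r) * max M 1 := by
        gcongr
        exact (hM _ (by simp [norm_smul, hu'.ne'])).trans (le_max_left _ _)
    _ = max M 1 * ‖u‖ ^ (s - r) := mul_comm _ _

theorem exists_norm_iteratedFDeriv_rpow_norm_const_sub_le [FiniteDimensional ℝ E] {s : ℝ} {r : ℕ}
    (hsr : s ≤ r) :
    ∃ M > 0, ∀ (a x : E) (d : ℝ), 0 < d → d ≤ ‖a - x‖ →
      ‖iteratedFDeriv ℝ r (fun y => ‖a - y‖ ^ s) x‖ ≤ M * d ^ (s - r) := by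
  obtain ⟨M, hM, hbound⟩ := exists_norm_iteratedFDeriv_rpow_norm_le (E := E) s r
  refine ⟨M, hM, fun a x d hd hdx => ?_⟩
  rw [norm_iteratedFDeriv_comp_const_sub (fun y => ‖y‖ ^ s)]
  refine (hbound _ (norm_pos_iff.mp (hd.trans_le hdx))).trans ?_
  exact mul_le_mul_of_nonneg_left (Real.rpow_le_rpow_of_nonpos hd hdx (by linarith)) hM.le

end IteratedFDeriv

theorem abs_sub_taylorPoly_le {n N : ℕ} {f : EuclideanSpace ℝ (Fin n) → ℝ}
    {c x : EuclideanSpace ℝ (Fin n)} {B : ℝ}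
    (hf : ∀ t ∈ Set.Icc (0 : ℝ) 1, ContDiffAt ℝ N f (c + t • (x - c)))
    (hB : ∀ t ∈ Set.Icc (0 : ℝ) 1, ‖iteratedFDeriv ℝ N f (c + t • (x - c))‖ ≤ B) :
    |f x - taylorPoly f c x N| ≤ B * ‖x - c‖ ^ N / N ! := by
  cases N with
  | zero => simpa [taylorPoly] using hB 1 (by simp)
  | succ m =>
  have htaylor := map_add_eq_sum_add_integral_iteratedFDeriv (n := m) (x := c) (y := x - c)
    (by exact_mod_cast hf)
  rw [add_sub_cancel] at htaylor
  simp only [smul_eq_mul] at htaylor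
  simp only [taylorPoly, one_div]
  rw [htaylor, add_sub_cancel_left, abs_mul, abs_inv, Nat.abs_cast]
  have hint : ‖∫ t in (0 : ℝ)..1,
      (1 - t) ^ m * iteratedFDeriv ℝ (m + 1) f (c + t • (x - c)) (fun _ => x - c)‖
      ≤ ∫ t in (0 : ℝ)..1, (1 - t) ^ m * (B * ‖x - c‖ ^ (m + 1)) := by
    refine intervalIntegral.norm_integral_le_of_norm_le zero_le_one
      (Filter.Eventually.of_forall fun t ht => ?_) ?_
    · have ht' : t ∈ Set.Icc (0 : ℝ) 1 := Set.Ioc_subset_Icc_self ht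
      have h1t : 0 ≤ 1 - t := by linarith [ht'.2]
      rw [norm_mul, norm_pow, Real.norm_of_nonneg h1t]
      gcongr
      exact ((iteratedFDeriv ℝ (m + 1) f _).le_opNorm_mul_pow_of_le (pi_norm_const_le _)).trans
        (by gcongr; exact hB t ht')
    · exact Continuous.intervalIntegrable (by fun_prop) _ _
  have hval : ∫ t in (0 : ℝ)..1, (1 - t) ^ m * (B * ‖x - c‖ ^ (m + 1))
      = B * ‖x - c‖ ^ (m + 1) / (m + 1) := by
    rw [intervalIntegral.integral_mul_const,
      intervalIntegral.integral_comp_sub_left (fun t => t ^ m), integral_pow]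
    norm_num
    field_simp
  rw [hval, Real.norm_eq_abs] at hint
  calc (m ! : ℝ)⁻¹ * |_| ≤ (m ! : ℝ)⁻¹ * (B * ‖x - c‖ ^ (m + 1) / (m + 1)) := by gcongr
    _ = _ := by rw [Nat.factorial_succ]; push_cast; field_simp

theorem norm_ofLp_le_norm {ι : Type*} [Fintype ι] (x : EuclideanSpace ℝ ι) : ‖ofLp x‖ ≤ ‖x‖ :=
  (pi_norm_le_iff_of_nonneg (norm_nonneg x)).mpr fun l => PiLp.norm_apply_le x l

theorem norm_le_sqrt_card_mul_norm_ofLp {ι : Type*} [Fintype ι] (x : EuclideanSpace ℝ ι) :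
    ‖x‖ ≤ √(Fintype.card ι) * ‖ofLp x‖ := by
  rw [EuclideanSpace.norm_eq, ← Real.sqrt_sq (norm_nonneg (ofLp x)),
    ← Real.sqrt_mul (Nat.cast_nonneg _)]
  gcongr
  calc ∑ l, ‖x l‖ ^ 2 ≤ ∑ _l : ι, ‖ofLp x‖ ^ 2 := by
        gcongr with l; exact norm_le_pi_norm (ofLp x) l
    _ = Fintype.card ι * ‖ofLp x‖ ^ 2 := by simp

theorem norm_ofLp_div_two_le_norm_sub_smul {ι : Type*} [Fintype ι] {w v : EuclideanSpace ℝ ι}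
    (h : 2 * ‖ofLp v‖ ≤ ‖ofLp w‖) {t : ℝ} (ht : t ∈ Set.Icc (0 : ℝ) 1) :
    ‖ofLp w‖ / 2 ≤ ‖w - t • v‖ := by
  have htv : ‖ofLp (t • v)‖ ≤ ‖ofLp v‖ := by
    rw [WithLp.ofLp_smul, norm_smul, Real.norm_of_nonneg ht.1]
    exact mul_le_of_le_one_left (norm_nonneg _) ht.2
  calc ‖ofLp w‖ / 2 ≤ ‖ofLp w‖ - ‖ofLp (t • v)‖ := by linarith
    _ ≤ ‖ofLp (w - t • v)‖ := by rw [WithLp.ofLp_sub]; exact norm_sub_norm_le _ _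
    _ ≤ ‖w - t • v‖ := norm_ofLp_le_norm _

section Lattice

variable {n : ℕ}

theorem toE_sub (a b : Fin n → ℤ) : toE (a - b) = toE a - toE b := by
  ext l; simp [toE]

theorem norm_toE (j : Fin n → ℤ) : ‖toE j‖ = znorm j := by
  simp [EuclideanSpace.norm_eq, znorm, toE]

theorem norm_ofLp_toE (j : Fin n → ℤ) : ‖ofLp (toE j)‖ = zinf j := by
  simp only [toE, WithLp.ofLp_toLp, Pi.norm_def, zinf]
  rw [← NNReal.coe_natCast, Nat.cast_finsetSup]
  congr 2
  ext l
  simp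

theorem zinf_div_two_le_norm_sub_segment {i k k0 : Fin n → ℤ}
    (h : 2 * zinf (i - k0) ≤ zinf (k - k0)) {t : ℝ} (ht : t ∈ Set.Icc (0 : ℝ) 1) :
    (zinf (k - k0) : ℝ) / 2 ≤ ‖toE k - (toE k0 + t • (toE i - toE k0))‖ := by
  rw [← sub_sub, ← toE_sub, ← toE_sub, ← norm_ofLp_toE]
  refine norm_ofLp_div_two_le_norm_sub_smul ?_ ht
  rw [norm_ofLp_toE, norm_ofLp_toE]
  exact_mod_cast h

theorem norm_toE_le_sqrt_mul_zinf (j : Fin n → ℤ) : ‖toE j‖ ≤ √n * zinf j := by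
  simpa [norm_ofLp_toE] using norm_le_sqrt_card_mul_norm_ofLp (toE j)

end Lattice

theorem stmt6_general (n : ℕ) (α : ℝ) (hα : 0 < α) (hαn : α < n) (N : ℕ) :
    ∃ C > (0 : ℝ), ∀ (i k k0 : Fin n → ℤ),
      0 < zinf (i - k0) → 2 * zinf (i - k0) ≤ zinf (k - k0) →
      |znorm (i - k) ^ (α - n) -
          taylorPoly (fun x => ‖toE k - x‖ ^ (α - n)) (toE k0) (toE i) N|
        ≤ C * ((zinf (i - k0) : ℝ)) ^ N * ((zinf (k - k0) : ℝ)) ^ (α - n - N) := by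
  obtain ⟨M, hM, hbound⟩ := exists_norm_iteratedFDeriv_rpow_norm_const_sub_le
    (E := EuclideanSpace ℝ (Fin n)) (r := N) (by linarith [N.cast_nonneg (α := ℝ)] : α - n ≤ N)
  have hn : (0 : ℝ) < n := hα.trans hαn
  refine ⟨M * 2 ^ (N - (α - n)) * √n ^ N / N !, by positivity, fun i k k0 hi hik => ?_⟩
  have hz : (0 : ℝ) < zinf (k - k0) / 2 := by
    have : (1 : ℝ) ≤ zinf (i - k0) := by exact_mod_cast hi
    have : (2 : ℝ) * zinf (i - k0) ≤ zinf (k - k0) := by exact_mod_cast hik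
    linarith
  have hseg := fun t (ht : t ∈ Set.Icc (0 : ℝ) 1) => zinf_div_two_le_norm_sub_segment hik ht
  have htaylor := abs_sub_taylorPoly_le (B := M * ((zinf (k - k0) : ℝ) / 2) ^ (α - n - N))
    (fun t ht => contDiffAt_rpow_norm_const_sub (norm_pos_iff.mp (hz.trans_le (hseg t ht))))
    (fun t ht => hbound _ _ _ hz (hseg t ht))
  rw [← norm_toE, toE_sub, norm_sub_rev]
  calc _ ≤ M * ((zinf (k - k0) : ℝ) / 2) ^ (α - n - N) * ‖toE i - toE k0‖ ^ N / N ! := htaylor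
    _ ≤ M * ((zinf (k - k0) : ℝ) / 2) ^ (α - n - N) * (√n * zinf (i - k0)) ^ N / N ! := by
        rw [← toE_sub]
        gcongr
        exact norm_toE_le_sqrt_mul_zinf _
    _ = _ := by
        rw [Real.div_rpow (Nat.cast_nonneg _) zero_le_two,
          show (N : ℝ) - (α - n) = -(α - n - N) by ring, Real.rpow_neg zero_le_two]
        ring

/-- Taylor remainder estimate for `x ↦ |k - x|^{α-n}` around `k⁰`:
if `|k-k⁰|_∞ ≥ 2|i-k⁰|_∞ > 0` then
`||i-k|^{α-n} - q_N(i,k)| ≤ C |i-k⁰|_∞^N |k-k⁰|_∞^{α-n-N}`. -/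
theorem stmt6 (n : ℕ) (α : ℝ) (hα : 0 < α) (hαn : α < n) (N : ℕ) (hN : 0 < N) :
    ∃ C > (0 : ℝ), ∀ (i k k0 : Fin n → ℤ),
      0 < zinf (i - k0) → 2 * zinf (i - k0) ≤ zinf (k - k0) →
      |znorm (i - k) ^ (α - n) -
          taylorPoly (fun x => ‖toE k - x‖ ^ (α - n)) (toE k0) (toE i) N|
        ≤ C * ((zinf (i - k0) : ℝ)) ^ N * ((zinf (k - k0) : ℝ)) ^ (α - n - N) :=
  stmt6_general n α hα hαn N
end
end

section
/- Let 0 ≤ α < n, 1 < p < n/α and 1/q = 1/p − α/n. The discrete centered fractional maximal operator M_α is bounded from ℓ^p(ℤⁿ) to ℓ^q(ℤⁿ). -/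
open scoped BigOperators ENNReal

noncomputable section

/-!
Hedberg's argument. On a cube `Q` centred at `j`, Hölder gives `#Q ^ (1/p - 1) ∑_Q |b| ≤ ‖b‖_p`;
interpolating this with the average `#Q⁻¹ ∑_Q |b| ≤ M₀ b j` yields
`M_α b ≤ (M₀ b) ^ (p/q) ‖b‖_p ^ (1 - p/q)`, so the theorem reduces to the `ℓ^p` bound for the
centred maximal operator `M₀`. That bound comes from the weak (1,1) estimate, proved by a Vitali
covering (a cube meeting a larger one lies in its concentric triple), applied at level `t/2` to the
part of `b` above `t/2` and integrated by the layer-cake formula.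
-/

open MeasureTheory Finset

open Set in
lemma lintegral_Ioo_rpow {a r : ℝ} (ha : 0 ≤ a) (hr : -1 < r) :
    ∫⁻ t in Ioo 0 a, ENNReal.ofReal (t ^ r) = ENNReal.ofReal (a ^ (r + 1) / (r + 1)) := by
  have hint : IntegrableOn (fun t : ℝ => t ^ r) (Ioc 0 a) :=
    (intervalIntegrable_iff_integrableOn_Ioc_of_le ha).1
      (intervalIntegral.intervalIntegrable_rpow' hr)
  have hnonneg : 0 ≤ᵐ[volume.restrict (Ioc 0 a)] fun t : ℝ => t ^ r := by
    filter_upwards [ae_restrict_mem measurableSet_Ioc] with t ht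
    exact Real.rpow_nonneg ht.1.le r
  rw [Measure.restrict_congr_set Ioo_ae_eq_Ioc, ← ofReal_integral_eq_lintegral_ofReal hint hnonneg,
    ← intervalIntegral.integral_of_le ha, integral_rpow (Or.inl hr),
    Real.zero_rpow (by linarith), sub_zero]

lemma ENNReal.card_rpow_mul_sum_le_rpow_sum {ι : Type*} (s : Finset ι) (f : ι → ℝ≥0∞) {p : ℝ}
    (hp : 1 ≤ p) : (#s : ℝ≥0∞) ^ (1 / p - 1) * ∑ i ∈ s, f i ≤ (∑ i ∈ s, f i ^ p) ^ (1 / p) := by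
  rcases s.eq_empty_or_nonempty with rfl | hs
  · simp
  have hp0 : 0 < p := by linarith
  have hC : (#s : ℝ≥0∞) ≠ 0 := by simpa using hs.ne_empty
  have hCtop : (#s : ℝ≥0∞) ≠ ∞ := ENNReal.natCast_ne_top _
  rw [one_div, ENNReal.le_rpow_inv_iff hp0, ENNReal.mul_rpow_of_nonneg _ _ hp0.le,
    ← ENNReal.rpow_mul]
  calc (#s : ℝ≥0∞) ^ ((p⁻¹ - 1) * p) * (∑ i ∈ s, f i) ^ p
      ≤ (#s : ℝ≥0∞) ^ ((p⁻¹ - 1) * p) * ((#s : ℝ≥0∞) ^ (p - 1) * ∑ i ∈ s, f i ^ p) := by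
        gcongr; exact ENNReal.rpow_sum_le_const_mul_sum_rpow s f hp
    _ = ∑ i ∈ s, f i ^ p := by
        rw [← mul_assoc, ← ENNReal.rpow_add _ _ hC hCtop,
          show (p⁻¹ - 1) * p + (p - 1) = 0 by field_simp; ring, ENNReal.rpow_zero, one_mul]

lemma ENNReal.le_rpow_one_div_tsum_rpow {ι : Type*} {p : ℝ} (hp : 0 < p) (f : ι → ℝ≥0∞) (i : ι) :
    f i ≤ (∑' i, f i ^ p) ^ (1 / p) := by
  calc f i = (f i ^ p) ^ (1 / p) := by rw [one_div, ENNReal.rpow_rpow_inv hp.ne']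
    _ ≤ _ := by gcongr; exact ENNReal.le_tsum i

section

variable {n : ℕ}

lemma mem_dcube {k i : Fin n → ℤ} {m : ℕ} :
    i ∈ dcube k m ↔ ∀ l, k l - m ≤ i l ∧ i l ≤ k l + m := by
  simp [dcube, Pi.le_def, forall_and]

lemma self_mem_dcube (k : Fin n → ℤ) (m : ℕ) : k ∈ dcube k m :=
  mem_dcube.2 fun _ => by omega

lemma card_dcube (k : Fin n → ℤ) (m : ℕ) : #(dcube k m) = (2 * m + 1) ^ n := by
  have h : ∀ l, k l + m + 1 - (k l - m) = ((2 * m + 1 : ℕ) : ℤ) := fun l => by push_cast; ring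
  simp only [dcube, Pi.card_Icc, Int.card_Icc, h, Int.toNat_natCast, prod_const, card_univ,
    Fintype.card_fin]

lemma card_dcube_ne_zero (k : Fin n → ℤ) (m : ℕ) : #(dcube k m) ≠ 0 :=
  (card_pos.2 ⟨k, self_mem_dcube k m⟩).ne'

lemma mem_dcube_two_mul {i j k : Fin n → ℤ} {m m' : ℕ} (hm : m ≤ m') (hj : i ∈ dcube j m)
    (hk : i ∈ dcube k m') : j ∈ dcube k (2 * m') := by
  rw [mem_dcube] at *
  intro l
  have hjl := hj l
  have hkl := hk l
  have hmm : (m : ℤ) ≤ m' := by exact_mod_cast hm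
  push_cast
  constructor <;> linarith

lemma card_dcube_two_mul_le (k : Fin n → ℤ) (m : ℕ) :
    #(dcube k (2 * m)) ≤ 3 ^ n * #(dcube k m) := by
  rw [card_dcube, card_dcube, ← mul_pow]
  exact Nat.pow_le_pow_left (by omega) n

lemma exists_pairwiseDisjoint_dcube (F : Finset (Fin n → ℤ)) (r : (Fin n → ℤ) → ℕ) :
    ∃ G ⊆ F, (G : Set (Fin n → ℤ)).PairwiseDisjoint (fun j => dcube j (r j)) ∧
      ∀ j ∈ F, ∃ g ∈ G, j ∈ dcube g (2 * r g) := by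
  classical
  -- with radii `2 ^ r`, the enlargement factor `3 / 2 < 2` forces `r j ≤ r g`
  obtain ⟨u, huF, hdisj, hcover⟩ := Vitali.exists_disjoint_subfamily_covering_enlargement
    (fun j => (dcube j (r j) : Set (Fin n → ℤ))) F (fun j => 2 ^ r j) (3 / 2) (by norm_num)
    (fun _ _ => by positivity) (∑ j ∈ F, 2 ^ r j)
    (fun j hj => single_le_sum (f := fun j => (2 : ℝ) ^ r j) (fun _ _ => by positivity) hj)
    (fun j _ => ⟨j, self_mem_dcube j (r j)⟩)
  refine ⟨F.filter (· ∈ u), filter_subset _ _, ?_, fun j hj => ?_⟩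
  · intro a ha b hb hab
    exact Finset.disjoint_coe.1 (hdisj (mem_filter.1 ha).2 (mem_filter.1 hb).2 hab)
  · obtain ⟨g, hgu, ⟨i, hij, hig⟩, hle⟩ := hcover j hj
    have hr : r j ≤ r g := by
      by_contra! h
      have : (2 : ℝ) ^ r g * 2 ≤ 2 ^ r j := by
        rw [← pow_succ]; exact pow_le_pow_right₀ one_le_two h
      nlinarith [pow_pos (two_pos : (0:ℝ) < 2) (r g)]
    exact ⟨g, mem_filter.2 ⟨huF hgu, hgu⟩, mem_dcube_two_mul hr hij hig⟩

lemma card_mul_le_of_le_sum_dcube (F : Finset (Fin n → ℤ)) (r : (Fin n → ℤ) → ℕ)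
    (c : (Fin n → ℤ) → ℝ≥0∞) (t : ℝ≥0∞)
    (h : ∀ j ∈ F, #(dcube j (r j)) * t ≤ ∑ i ∈ dcube j (r j), c i) :
    #F * t ≤ 3 ^ n * ∑' i, c i := by
  obtain ⟨G, hGF, hdisj, hcover⟩ := exists_pairwiseDisjoint_dcube F r
  have hcard : #F ≤ ∑ g ∈ G, 3 ^ n * #(dcube g (r g)) := by
    calc #F ≤ #(G.biUnion fun g => dcube g (2 * r g)) := by
          refine card_le_card fun j hj => ?_
          obtain ⟨g, hg, hjg⟩ := hcover j hj
          exact mem_biUnion.2 ⟨g, hg, hjg⟩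
      _ ≤ ∑ g ∈ G, #(dcube g (2 * r g)) := card_biUnion_le
      _ ≤ ∑ g ∈ G, 3 ^ n * #(dcube g (r g)) := sum_le_sum fun g _ => card_dcube_two_mul_le g (r g)
  calc (#F : ℝ≥0∞) * t ≤ (∑ g ∈ G, 3 ^ n * #(dcube g (r g)) : ℕ) * t := by gcongr
    _ = 3 ^ n * ∑ g ∈ G, #(dcube g (r g)) * t := by
        push_cast; simp only [sum_mul, mul_sum, mul_assoc]
    _ ≤ 3 ^ n * ∑ g ∈ G, ∑ i ∈ dcube g (r g), c i := by gcongr with g hg; exact h g (hGF hg)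
    _ = 3 ^ n * ∑ i ∈ G.biUnion fun g => dcube g (r g), c i := by rw [sum_biUnion hdisj]
    _ ≤ 3 ^ n * ∑' i, c i := by gcongr; exact ENNReal.sum_le_tsum _

lemma fracMax_eq_iSup (α : ℝ) (b : (Fin n → ℤ) → ℝ) (j : Fin n → ℤ) :
    fracMax α b j = ⨆ m : ℕ, (#(dcube j m) : ℝ≥0∞) ^ (α / n - 1) *
      ∑ i ∈ dcube j m, ENNReal.ofReal |b i| := by
  refine iSup_congr fun m => ?_
  have hpos : (0 : ℝ) < #(dcube j m) :=
    Nat.cast_pos.2 (Nat.pos_of_ne_zero (card_dcube_ne_zero j m))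
  rw [ENNReal.ofReal_mul (Real.rpow_nonneg hpos.le _), ← ENNReal.ofReal_rpow_of_pos hpos,
    ENNReal.ofReal_natCast, ENNReal.ofReal_sum_of_nonneg fun i _ => abs_nonneg _]

lemma fracMax_zero_eq_iSup (b : (Fin n → ℤ) → ℝ) (j : Fin n → ℤ) :
    fracMax 0 b j = ⨆ m : ℕ, (#(dcube j m) : ℝ≥0∞)⁻¹ * ∑ i ∈ dcube j m, ENNReal.ofReal |b i| := by
  simp only [fracMax_eq_iSup, zero_div, zero_sub, ENNReal.rpow_neg_one]

lemma fracMax_zero_le_add {b c : (Fin n → ℤ) → ℝ} {s : ℝ≥0∞}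
    (h : ∀ i, ENNReal.ofReal |b i| ≤ ENNReal.ofReal |c i| + s) (j : Fin n → ℤ) :
    fracMax 0 b j ≤ fracMax 0 c j + s := by
  rw [fracMax_zero_eq_iSup]
  refine iSup_le fun m => ?_
  have hC : (#(dcube j m) : ℝ≥0∞) ≠ 0 := Nat.cast_ne_zero.2 (card_dcube_ne_zero j m)
  calc (#(dcube j m) : ℝ≥0∞)⁻¹ * ∑ i ∈ dcube j m, ENNReal.ofReal |b i|
      ≤ (#(dcube j m) : ℝ≥0∞)⁻¹ * ∑ i ∈ dcube j m, (ENNReal.ofReal |c i| + s) := by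
        gcongr with i; exact h i
    _ = (#(dcube j m) : ℝ≥0∞)⁻¹ * ∑ i ∈ dcube j m, ENNReal.ofReal |c i| + s := by
        rw [sum_add_distrib, sum_const, nsmul_eq_mul, mul_add, ← mul_assoc,
          ENNReal.inv_mul_cancel hC (ENNReal.natCast_ne_top _), one_mul]
    _ ≤ fracMax 0 c j + s := by
        rw [fracMax_zero_eq_iSup]
        gcongr
        exact le_iSup (fun m => (#(dcube j m) : ℝ≥0∞)⁻¹ * ∑ i ∈ dcube j m, ENNReal.ofReal |c i|) m

lemma fracMax_zero_le_of_le {b : (Fin n → ℤ) → ℝ} {s : ℝ≥0∞} (h : ∀ i, ENNReal.ofReal |b i| ≤ s)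
    (j : Fin n → ℤ) : fracMax 0 b j ≤ s := by
  simpa [fracMax] using fracMax_zero_le_add (c := 0) (by simpa using h) j

lemma count_lt_fracMax_zero_mul_le (c : (Fin n → ℤ) → ℝ) (t : ℝ≥0∞) :
    Measure.count {j | t < fracMax 0 c j} * t ≤ 3 ^ n * ∑' i, ENNReal.ofReal |c i| := by
  have hr : ∀ j, ∃ m : ℕ, t < fracMax 0 c j →
      #(dcube j m) * t ≤ ∑ i ∈ dcube j m, ENNReal.ofReal |c i| := by
    intro j
    by_cases hj : t < fracMax 0 c j
    · rw [fracMax_zero_eq_iSup, lt_iSup_iff] at hj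
      obtain ⟨m, hm⟩ := hj
      refine ⟨m, fun _ => ?_⟩
      have hC : (#(dcube j m) : ℝ≥0∞) ≠ 0 := Nat.cast_ne_zero.2 (card_dcube_ne_zero j m)
      rw [← ENNReal.div_eq_inv_mul, ENNReal.lt_div_iff_mul_lt (Or.inl hC) (by simp)] at hm
      rw [mul_comm]
      exact hm.le
    · exact ⟨0, fun h => absurd h hj⟩
  choose r hr using hr
  rw [← lintegral_indicator_one (DiscreteMeasurableSpace.forall_measurableSet _), lintegral_count,
    ENNReal.tsum_eq_iSup_sum, ENNReal.iSup_mul]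
  refine iSup_le fun F => ?_
  have : ∑ j ∈ F, {j | t < fracMax 0 c j}.indicator (1 : (Fin n → ℤ) → ℝ≥0∞) j =
      #(F.filter fun j => t < fracMax 0 c j) := by
    simp [Set.indicator_apply]
  rw [this]
  exact card_mul_le_of_le_sum_dcube _ r _ t fun j hj => hr j (mem_filter.1 hj).2

section LayerCake

open Set

lemma count_two_mul_lt_fracMax_zero_mul_le (b : (Fin n → ℤ) → ℝ) (s : ℝ≥0∞) :
    Measure.count {j | 2 * s < fracMax 0 b j} * s ≤
      3 ^ n * ∑' i, {i | s < ENNReal.ofReal |b i|}.indicator (fun i => ENNReal.ofReal |b i|) i := by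
  set c : (Fin n → ℤ) → ℝ := {i | s < ENNReal.ofReal |b i|}.indicator b
  have habs : ∀ i, ENNReal.ofReal |c i| =
      {i | s < ENNReal.ofReal |b i|}.indicator (fun i => ENNReal.ofReal |b i|) i := by
    intro i
    by_cases hi : s < ENNReal.ofReal |b i| <;> simp [c, hi]
  have hsub : {j | 2 * s < fracMax 0 b j} ⊆ {j | s < fracMax 0 c j} := by
    intro j (hj : 2 * s < fracMax 0 b j)
    have hle : fracMax 0 b j ≤ fracMax 0 c j + s := by
      refine fracMax_zero_le_add (fun i => ?_) j
      by_cases hi : s < ENNReal.ofReal |b i|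
      · simp [c, hi]
      · simpa [c, hi] using not_lt.1 hi
    show s < fracMax 0 c j
    by_contra! hcs
    have : fracMax 0 b j ≤ 2 * s := hle.trans (by rw [two_mul]; gcongr)
    exact absurd hj (not_lt.2 this)
  calc Measure.count {j | 2 * s < fracMax 0 b j} * s
      ≤ Measure.count {j | s < fracMax 0 c j} * s := by gcongr
    _ ≤ 3 ^ n * ∑' i, ENNReal.ofReal |c i| := count_lt_fracMax_zero_mul_le c s
    _ = _ := by simp only [habs]

lemma count_lt_fracMax_zero_mul_rpow_le (p : ℝ) (b : (Fin n → ℤ) → ℝ) {t : ℝ} (ht : 0 < t) :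
    Measure.count {j | ENNReal.ofReal t < fracMax 0 b j} * ENNReal.ofReal (t ^ (p - 1)) ≤
      ∑' i, 2 * 3 ^ n * ENNReal.ofReal |b i| *
        (Iio (2 * |b i|)).indicator (fun t => ENNReal.ofReal (t ^ (p - 2))) t := by
  have htwo : ENNReal.ofReal t = 2 * ENNReal.ofReal (t / 2) := by
    rw [← ENNReal.ofReal_ofNat 2, ← ENNReal.ofReal_mul zero_le_two]; ring_nf
  have hpow : ENNReal.ofReal (t ^ (p - 1)) =
      ENNReal.ofReal (t / 2) * ENNReal.ofReal (2 * t ^ (p - 2)) := by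
    rw [← ENNReal.ofReal_mul (by positivity), show p - 1 = p - 2 + 1 by ring,
      Real.rpow_add_one ht.ne']
    ring_nf
  have hlevel : ∀ i, ENNReal.ofReal (t / 2) < ENNReal.ofReal |b i| ↔ t < 2 * |b i| := by
    intro i
    rw [ENNReal.ofReal_lt_ofReal_iff']
    constructor
    · rintro ⟨h, -⟩; linarith
    · intro h; constructor <;> linarith
  calc Measure.count {j | ENNReal.ofReal t < fracMax 0 b j} * ENNReal.ofReal (t ^ (p - 1))
      = Measure.count {j | 2 * ENNReal.ofReal (t / 2) < fracMax 0 b j} * ENNReal.ofReal (t / 2) *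
          ENNReal.ofReal (2 * t ^ (p - 2)) := by rw [htwo, hpow, mul_assoc]
    _ ≤ 3 ^ n * (∑' i, {i | ENNReal.ofReal (t / 2) < ENNReal.ofReal |b i|}.indicator
          (fun i => ENNReal.ofReal |b i|) i) * ENNReal.ofReal (2 * t ^ (p - 2)) := by
        gcongr ?_ * _; exact count_two_mul_lt_fracMax_zero_mul_le b _
    _ = _ := by
        rw [← ENNReal.tsum_mul_left, ← ENNReal.tsum_mul_right]
        refine tsum_congr fun i => ?_
        by_cases hi : t < 2 * |b i|
        · rw [indicator_of_mem (s := {i | ENNReal.ofReal (t / 2) < ENNReal.ofReal |b i|})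
            ((hlevel i).2 hi), indicator_of_mem (show t ∈ Iio (2 * |b i|) from hi),
            ENNReal.ofReal_mul zero_le_two, ENNReal.ofReal_ofNat]
          ring
        · rw [indicator_of_notMem (s := {i | ENNReal.ofReal (t / 2) < ENNReal.ofReal |b i|})
            (mt (hlevel i).1 hi), indicator_of_notMem (show t ∉ Iio (2 * |b i|) from hi)]
          simp

lemma mul_lintegral_Ioi_indicator_eq {p a : ℝ} (hp : 1 < p) (ha : 0 ≤ a) :
    ENNReal.ofReal p * ∫⁻ t in Ioi 0, 2 * 3 ^ n * ENNReal.ofReal a *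
        (Iio (2 * a)).indicator (fun t => ENNReal.ofReal (t ^ (p - 2))) t =
      ENNReal.ofReal (2 ^ p * 3 ^ n * p / (p - 1)) * ENNReal.ofReal a ^ p := by
  have hconst : (2 * 3 ^ n * ENNReal.ofReal a : ℝ≥0∞) = ENNReal.ofReal (2 * 3 ^ n * a) := by
    rw [ENNReal.ofReal_mul (by positivity), ENNReal.ofReal_mul zero_le_two,
      ENNReal.ofReal_pow zero_le_three]
    norm_num
  have hpow : a ^ p = a ^ (p - 1) * a := by
    rw [← Real.rpow_add_one' ha (by linarith), sub_add_cancel]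
  rw [hconst, lintegral_const_mul' _ _ ENNReal.ofReal_ne_top, lintegral_indicator measurableSet_Iio,
    Measure.restrict_restrict measurableSet_Iio, Iio_inter_Ioi,
    lintegral_Ioo_rpow (by positivity) (by linarith),
    ENNReal.ofReal_rpow_of_nonneg ha (by linarith : 0 ≤ p), ← ENNReal.ofReal_mul (by positivity),
    ← ENNReal.ofReal_mul (by linarith), ← ENNReal.ofReal_mul (by positivity)]
  congr 1
  rw [show p - 2 + 1 = p - 1 by ring, Real.mul_rpow zero_le_two ha, hpow,
    Real.rpow_sub_one two_ne_zero]
  field_simp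

theorem tsum_fracMax_zero_rpow_le {p : ℝ} (hp : 1 < p) (b : (Fin n → ℤ) → ℝ) :
    ∑' j, fracMax 0 b j ^ p ≤
      ENNReal.ofReal (2 ^ p * 3 ^ n * p / (p - 1)) * ∑' i, ENNReal.ofReal |b i| ^ p := by
  have hp0 : 0 < p := by linarith
  by_cases hN : ∑' i, ENNReal.ofReal |b i| ^ p = ∞
  · rw [hN, ENNReal.mul_top (by rw [Ne, ENNReal.ofReal_eq_zero, not_le]; bound)]
    exact le_top
  have hfin : ∀ j, fracMax 0 b j ≠ ∞ := fun j =>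
    ne_top_of_le_ne_top (ENNReal.rpow_ne_top_of_nonneg (by positivity) hN)
      (fracMax_zero_le_of_le (ENNReal.le_rpow_one_div_tsum_rpow hp0 _) j)
  set f : (Fin n → ℤ) → ℝ := fun j => (fracMax 0 b j).toReal
  have hlayer : ∑' j, fracMax 0 b j ^ p = ENNReal.ofReal p *
      ∫⁻ t in Ioi 0, Measure.count {j | t < f j} * ENNReal.ofReal (t ^ (p - 1)) := by
    rw [← lintegral_rpow_eq_lintegral_meas_lt_mul Measure.count
      (Filter.Eventually.of_forall fun j => ENNReal.toReal_nonneg)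
      (measurable_of_countable f).aemeasurable hp0, lintegral_count]
    refine tsum_congr fun j => ?_
    rw [← ENNReal.ofReal_rpow_of_nonneg ENNReal.toReal_nonneg hp0.le,
      ENNReal.ofReal_toReal (hfin j)]
  have hlevel : ∀ t ∈ Ioi (0 : ℝ), Measure.count {j | t < f j} * ENNReal.ofReal (t ^ (p - 1)) ≤
      ∑' i, 2 * 3 ^ n * ENNReal.ofReal |b i| *
        (Iio (2 * |b i|)).indicator (fun t => ENNReal.ofReal (t ^ (p - 2))) t := by
    intro t (ht : 0 < t)
    have hset : {j | t < f j} = {j | ENNReal.ofReal t < fracMax 0 b j} := by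
      ext j
      exact (ENNReal.ofReal_lt_iff_lt_toReal ht.le (hfin j)).symm
    rw [hset]
    exact count_lt_fracMax_zero_mul_rpow_le p b ht
  have hmeas : ∀ i, AEMeasurable (fun t => 2 * 3 ^ n * ENNReal.ofReal |b i| *
      (Iio (2 * |b i|)).indicator (fun t : ℝ => ENNReal.ofReal (t ^ (p - 2))) t)
      (volume.restrict (Ioi 0)) := fun i =>
    (measurable_const.mul ((measurable_id.pow_const _).ennreal_ofReal.indicator
      measurableSet_Iio)).aemeasurable
  calc ∑' j, fracMax 0 b j ^ p
      ≤ ENNReal.ofReal p * ∫⁻ t in Ioi 0, ∑' i, 2 * 3 ^ n * ENNReal.ofReal |b i| *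
          (Iio (2 * |b i|)).indicator (fun t => ENNReal.ofReal (t ^ (p - 2))) t := by
        rw [hlayer]; gcongr _ * ?_; exact setLIntegral_mono' measurableSet_Ioi hlevel
    _ = ∑' i, ENNReal.ofReal (2 ^ p * 3 ^ n * p / (p - 1)) * ENNReal.ofReal |b i| ^ p := by
        rw [lintegral_tsum hmeas, ← ENNReal.tsum_mul_left]
        exact tsum_congr fun i => mul_lintegral_Ioi_indicator_eq hp (abs_nonneg _)
    _ = _ := ENNReal.tsum_mul_left

end LayerCake

lemma fracMax_le_fracMax_zero_rpow_mul {α p : ℝ} (hp : 1 ≤ p) (hα : 0 ≤ α) (hαp : α * p ≤ n)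
    (b : (Fin n → ℤ) → ℝ) (j : Fin n → ℤ) :
    fracMax α b j ≤
      fracMax 0 b j ^ (1 - α * p / n) * (∑' i, ENNReal.ofReal |b i| ^ p) ^ (α / n) := by
  have hp0 : 0 < p := by linarith
  set θ := 1 - α * p / n with hθ
  have hθ0 : 0 ≤ θ := by rw [hθ, sub_nonneg]; exact div_le_one_of_le₀ hαp (Nat.cast_nonneg n)
  have hθ1 : 0 ≤ 1 - θ := by rw [hθ, sub_sub_cancel]; positivity
  rw [fracMax_eq_iSup]
  refine iSup_le fun m => ?_
  set C : ℝ≥0∞ := (#(dcube j m) : ℝ≥0∞)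
  set S := ∑ i ∈ dcube j m, ENNReal.ofReal |b i|
  have hC : C ≠ 0 := Nat.cast_ne_zero.2 (card_dcube_ne_zero j m)
  have hCtop : C ≠ ∞ := ENNReal.natCast_ne_top _
  have havg : C⁻¹ * S ≤ fracMax 0 b j := by
    rw [fracMax_zero_eq_iSup]
    exact le_iSup (fun m => (#(dcube j m) : ℝ≥0∞)⁻¹ * ∑ i ∈ dcube j m, ENNReal.ofReal |b i|) m
  have hholder : C ^ (1 / p - 1) * S ≤ (∑' i, ENNReal.ofReal |b i| ^ p) ^ (1 / p) :=
    (ENNReal.card_rpow_mul_sum_le_rpow_sum _ _ hp).trans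
      (by gcongr; exact ENNReal.sum_le_tsum _)
  calc C ^ (α / n - 1) * S = (C⁻¹ * S) ^ θ * (C ^ (1 / p - 1) * S) ^ (1 - θ) := by
        rw [ENNReal.mul_rpow_of_nonneg _ _ hθ0, ENNReal.mul_rpow_of_nonneg _ _ hθ1,
          ENNReal.inv_rpow, ← ENNReal.rpow_neg, ← ENNReal.rpow_mul, mul_mul_mul_comm,
          ← ENNReal.rpow_add _ _ hC hCtop, ← ENNReal.rpow_add_of_nonneg _ _ hθ0 hθ1,
          add_sub_cancel, ENNReal.rpow_one]
        congr 2
        rw [hθ]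
        field_simp
        ring
    _ ≤ fracMax 0 b j ^ θ * ((∑' i, ENNReal.ofReal |b i| ^ p) ^ (1 / p)) ^ (1 - θ) := by
        gcongr
    _ = fracMax 0 b j ^ θ * (∑' i, ENNReal.ofReal |b i| ^ p) ^ (α / n) := by
        rw [← ENNReal.rpow_mul, hθ]
        congr 2
        field_simp
        ring

lemma pos_and_le_of_one_div_eq_sub {α p q : ℝ} (hp : 1 < p) (hα : 0 ≤ α) (hpn : α * p < n)
    (hq : 1 / q = 1 / p - α / n) : 0 < q ∧ p ≤ q := by
  have hp0 : 0 < p := by linarith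
  have hn : (0 : ℝ) < n := by nlinarith
  have hq0 : 0 < q := one_div_pos.1 (by rw [hq, sub_pos, div_lt_div_iff₀ hn hp0]; linarith)
  refine ⟨hq0, ?_⟩
  rw [← one_div_le_one_div hq0 hp0, hq, sub_le_self_iff]
  positivity

lemma tsum_fracMax_rpow_le {α p q : ℝ} (hp : 1 < p) (hα : 0 ≤ α) (hpn : α * p < n)
    (hq : 1 / q = 1 / p - α / n) (b : (Fin n → ℤ) → ℝ) :
    ∑' j, fracMax α b j ^ q ≤ ENNReal.ofReal (2 ^ p * 3 ^ n * p / (p - 1)) *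
      (∑' i, ENNReal.ofReal |b i| ^ p) ^ (q / p) := by
  set N := ∑' i, ENNReal.ofReal |b i| ^ p
  have hp0 : 0 < p := by linarith
  obtain ⟨hq0, hpq⟩ := pos_and_le_of_one_div_eq_sub hp hα hpn hq
  have hθ : 1 - α * p / n = p / q := by rw [div_eq_mul_one_div p q, hq]; field_simp
  have hαnq : α / n = 1 / p - 1 / q := by rw [hq]; ring
  calc ∑' j, fracMax α b j ^ q
      ≤ ∑' j, (fracMax 0 b j ^ (p / q) * N ^ (1 / p - 1 / q)) ^ q := by
        gcongr with j
        rw [← hθ, ← hαnq]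
        exact fracMax_le_fracMax_zero_rpow_mul hp.le hα hpn.le b j
    _ = (∑' j, fracMax 0 b j ^ p) * N ^ (q / p - 1) := by
        rw [← ENNReal.tsum_mul_right]
        refine tsum_congr fun j => ?_
        rw [ENNReal.mul_rpow_of_nonneg _ _ hq0.le, ← ENNReal.rpow_mul, ← ENNReal.rpow_mul]
        congr 2 <;> field_simp
    _ ≤ ENNReal.ofReal (2 ^ p * 3 ^ n * p / (p - 1)) * N * N ^ (q / p - 1) := by
        gcongr; exact tsum_fracMax_zero_rpow_le hp b
    _ = ENNReal.ofReal (2 ^ p * 3 ^ n * p / (p - 1)) * N ^ (q / p) := by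
        have hqp : 0 ≤ q / p - 1 := by rw [sub_nonneg, one_le_div hp0]; exact hpq
        have hsplit : N ^ (q / p) = N ^ (1 : ℝ) * N ^ (q / p - 1) := by
          rw [← ENNReal.rpow_add_of_nonneg _ _ zero_le_one hqp, add_sub_cancel]
        rw [hsplit, ENNReal.rpow_one, mul_assoc]

end

theorem stmt10_general (n : ℕ) (α p q : ℝ) (hα : 0 ≤ α)
    (hp : 1 < p) (hpn : α * p < n) (hq : 1 / q = 1 / p - α / n) :
    ∃ C > (0 : ℝ), ∀ b : (Fin n → ℤ) → ℝ,
      elpE q (fracMax α b) ≤ ENNReal.ofReal C * elp p b := by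
  obtain ⟨hq0, -⟩ := pos_and_le_of_one_div_eq_sub hp hα hpn hq
  set K : ℝ := 2 ^ p * 3 ^ n * p / (p - 1)
  have hK : 0 < K := div_pos (by positivity) (by linarith)
  refine ⟨K ^ (1 / q), Real.rpow_pos_of_pos hK _, fun b => ?_⟩
  calc elpE q (fracMax α b)
      ≤ (ENNReal.ofReal K * (∑' i, ENNReal.ofReal |b i| ^ p) ^ (q / p)) ^ (1 / q) :=
        ENNReal.rpow_le_rpow (tsum_fracMax_rpow_le hp hα hpn hq b) (by positivity)
    _ = ENNReal.ofReal (K ^ (1 / q)) * elp p b := by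
        rw [ENNReal.mul_rpow_of_nonneg _ _ (by positivity), ← ENNReal.rpow_mul,
          ENNReal.ofReal_rpow_of_pos hK, elp]
        congr 2
        field_simp

/-- the centered discrete fractional maximal operator `M_α` is bounded from
`ℓ^p(ℤⁿ)` into `ℓ^q(ℤⁿ)` for `0 ≤ α < n`, `1 < p < n/α`, `1/q = 1/p - α/n`. -/
theorem stmt10 (n : ℕ) (α p q : ℝ) (hα : 0 ≤ α) (hαn : α < n)
    (hp : 1 < p) (hpn : α * p < n) (hq : 1 / q = 1 / p - α / n) :
    ∃ C > (0 : ℝ), ∀ b : (Fin n → ℤ) → ℝ,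
      elpE q (fracMax α b) ≤ ENNReal.ofReal C * elp p b :=
  stmt10_general n α p q hα hp hpn hq
end
end
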